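/- Let A be an MV-algebra satisfying 2x² = (2x)² for all x. If an element x ∈ A satisfies 2ⁿx = 1 for some natural number n, then 2x = 1. In particular, every element of finite order in such an algebra has order at most 2. -/

import Mathlib

/-- An MV-algebra `(A, ⊕, ¬, 0)`. -/
class MV (A : Type*) where
  op : A → A → A
  neg : A → A
  zero : A
  op_assoc : ∀ x y z : A, op (op x y) z = op x (op y z)
  op_comm : ∀ x y : A, op x y = op y x
  op_zero : ∀ x : A, op x zero = x
  neg_neg : ∀ x : A, neg (neg x) = x
  op_neg_zero : ∀ x : A, op x (neg zero) = neg zero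
  mv6 : ∀ x y : A, op (neg (op (neg x) y)) y = op (neg (op (neg y) x)) x

namespace MV

variable {A : Type*} [MV A]

/-- `1 := ¬0`. -/
def one : A := neg zero

/-- `x ⊙ y := ¬(¬x ⊕ ¬y)`. -/
def odot (x y : A) : A := neg (op (neg x) (neg y))

/-- `sup(x,y) := (x ⊙ ¬y) ⊕ y`. -/
def ssup (x y : A) : A := op (odot x (neg y)) y

/-- `inf(x,y) := (x ⊕ ¬y) ⊙ y`. -/
def sinf (x y : A) : A := odot (op x (neg y)) y

/-- `x ≤ y` iff `¬x ⊕ y = 1`. -/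
def le (x y : A) : Prop := op (neg x) y = one

/-- `x ≤ y` iff `inf(x,y) = x`. -/
def leInf (x y : A) : Prop := sinf x y = x

/-- `n`-fold sum `nx = x ⊕ ⋯ ⊕ x`. -/
def nsm : ℕ → A → A
  | 0, _ => zero
  | n + 1, x => op x (nsm n x)

/-- `x² := x ⊙ x`. -/
def sq (x : A) : A := odot x x

end MV

/-!
Put `u := (¬x)²`, so that `¬u = 2x`. If `4x = 1` then `u² = ¬(4x) = 0`, and always `u ⊙ x² = 0`.
In an MV-algebra `(a ∨ b)² = a² ∨ b²` whenever `a ⊙ b = 0`; applied to `x ∨ ¬x`, whose double is `1`,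
the identity `2y² = (2y)²` gives `2m = 1` for `m := x² ∨ u`, and then `2m² = 1` with `m² = x⁴ ∨ u² = x⁴`.
Since `y² ≤ y`, from `2x⁴ = 1` we climb to `2x² = 1` and `2x = 1`. Induction on `n` turns `4x = 1 ⇒ 2x = 1`
into `2ⁿx = 1 ⇒ 2x = 1`, and `nx = 1` implies `2ⁿx = 1` because `n ≤ 2ⁿ`.
-/

namespace MV

variable {A : Type*} [MV A]

lemma zero_op (x : A) : op zero x = x := by rw [op_comm, op_zero]

lemma op_one (x : A) : op x one = one := op_neg_zero x

lemma one_op (x : A) : op one x = one := by rw [op_comm, op_one]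

lemma neg_one : (neg one : A) = zero := neg_neg zero

lemma neg_injective : Function.Injective (neg : A → A) := fun x y h => by
  rw [← neg_neg x, h, neg_neg]

lemma neg_op_self (x : A) : op (neg x) x = one := by
  simpa only [op_one, neg_one, zero_op] using (mv6 x (one : A)).symm

lemma neg_odot (x y : A) : neg (odot x y) = op (neg x) (neg y) := by rw [odot, neg_neg]

lemma neg_op (x y : A) : neg (op x y) = odot (neg x) (neg y) := by rw [odot, neg_neg, neg_neg]

lemma odot_comm (x y : A) : odot x y = odot y x := by rw [odot, odot, op_comm]

lemma odot_assoc (x y z : A) : odot (odot x y) z = odot x (odot y z) := by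
  simp only [odot, neg_neg, op_assoc]

lemma odot_zero (x : A) : odot x zero = zero := by
  rw [odot, ← one, op_one, neg_one]

lemma zero_odot (x : A) : odot zero x = zero := by rw [odot_comm, odot_zero]

lemma odot_neg_self (x : A) : odot x (neg x) = zero := by
  rw [odot, neg_neg, neg_op_self, neg_one]

lemma one_sq : (sq one : A) = one := by
  rw [sq, odot, neg_one, op_zero, one]

lemma sq_odot (a b : A) : sq (odot a b) = odot (sq a) (sq b) := by
  simp only [sq, odot, neg_neg]
  congr 1
  rw [op_assoc, op_assoc, ← op_assoc (neg b), op_comm (neg b) (neg a), op_assoc]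

lemma le_refl (x : A) : le x x := neg_op_self x

lemma le_one (x : A) : le x one := op_one _

lemma le_antisymm {x y : A} (hxy : le x y) (hyx : le y x) : x = y := by
  rw [le] at hxy hyx
  simpa only [hxy, hyx, neg_one, zero_op] using (mv6 x y).symm

lemma eq_one_of_one_le {x : A} (h : le one x) : x = one :=
  (le_antisymm h (le_one x)).symm

lemma le_op_right (x c : A) : le x (op x c) := by
  rw [le, ← op_assoc, neg_op_self, one_op]

-- The witness is `y ⊙ ¬x`: axiom `mv6` with `¬x ⊕ y = 1` reads `y = x ⊕ (y ⊙ ¬x)`.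
lemma le_iff_exists_op {x y : A} : le x y ↔ ∃ c, y = op x c := by
  refine ⟨fun h => ⟨neg (op (neg y) x), ?_⟩, fun ⟨c, hc⟩ => hc ▸ le_op_right x c⟩
  have h6 := mv6 x y
  rw [show op (neg x) y = one from h, neg_one, zero_op] at h6
  rw [op_comm]
  exact h6

lemma le_trans {x y z : A} (hxy : le x y) (hyz : le y z) : le x z := by
  obtain ⟨c, rfl⟩ := le_iff_exists_op.mp hxy
  obtain ⟨d, rfl⟩ := le_iff_exists_op.mp hyz
  rw [op_assoc]
  exact le_op_right x _

lemma op_le_op {a b c d : A} (hab : le a b) (hcd : le c d) : le (op a c) (op b d) := by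
  obtain ⟨p, rfl⟩ := le_iff_exists_op.mp hab
  obtain ⟨q, rfl⟩ := le_iff_exists_op.mp hcd
  refine le_iff_exists_op.mpr ⟨op p q, ?_⟩
  rw [op_assoc, op_assoc, ← op_assoc p c q, op_comm p c, op_assoc]

lemma neg_le_neg {x y : A} (h : le x y) : le (neg y) (neg x) := by
  rwa [le, neg_neg, op_comm]

lemma odot_le_odot {a b c d : A} (hab : le a b) (hcd : le c d) : le (odot a c) (odot b d) :=
  neg_le_neg (op_le_op (neg_le_neg hab) (neg_le_neg hcd))

lemma le_iff_odot_neg_eq_zero {x y : A} : le x y ↔ odot x (neg y) = zero := by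
  rw [le, odot, neg_neg, ← neg_one]
  exact neg_injective.eq_iff.symm

lemma odot_le_iff_le_neg_op {a b c : A} : le (odot a b) c ↔ le b (op (neg a) c) := by
  rw [le_iff_odot_neg_eq_zero, le_iff_odot_neg_eq_zero, odot_comm a b, odot_assoc,
    neg_op, neg_neg]

lemma sq_le_self (x : A) : le (sq x) x := by
  rw [le, sq, neg_odot, op_assoc, neg_op_self, op_one]

lemma op_self_eq_one_of_op_sq_eq_one {x : A} (h : op (sq x) (sq x) = one) : op x x = one :=
  eq_one_of_one_le (h ▸ op_le_op (sq_le_self x) (sq_le_self x))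

lemma ssup_comm (x y : A) : ssup x y = ssup y x := by
  simpa only [ssup, odot, neg_neg] using mv6 x y

lemma le_ssup_right (x y : A) : le y (ssup x y) := by
  rw [ssup, op_comm]
  exact le_op_right y _

lemma le_ssup_left (x y : A) : le x (ssup x y) := ssup_comm y x ▸ le_ssup_right y x

lemma ssup_le {x y c : A} (hx : le x c) (hy : le y c) : le (ssup x y) c := by
  have hc : ssup y c = c := by rw [ssup, le_iff_odot_neg_eq_zero.mp hy, zero_op]
  have h := op_le_op (odot_le_odot hx (le_refl (neg y))) (le_refl y)
  change le (ssup x y) (ssup c y) at h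
  rwa [ssup_comm c y, hc] at h

lemma ssup_zero (x : A) : ssup x zero = x := by
  rw [ssup, op_zero, odot, neg_neg, op_zero, neg_neg]

lemma zero_ssup (x : A) : ssup zero x = x := by rw [ssup_comm, ssup_zero]

lemma odot_ssup (a b c : A) : odot a (ssup b c) = ssup (odot a b) (odot a c) := by
  have le_neg_op_odot (y : A) : le y (op (neg a) (odot a y)) :=
    odot_le_iff_le_neg_op.mp (le_refl _)
  apply le_antisymm
  · refine odot_le_iff_le_neg_op.mpr (ssup_le ?_ ?_)
    · exact le_trans (le_neg_op_odot b) (op_le_op (le_refl _) (le_ssup_left _ _))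
    · exact le_trans (le_neg_op_odot c) (op_le_op (le_refl _) (le_ssup_right _ _))
  · exact ssup_le (odot_le_odot (le_refl a) (le_ssup_left b c))
      (odot_le_odot (le_refl a) (le_ssup_right b c))

lemma sq_ssup_of_odot_eq_zero {a b : A} (h : odot a b = zero) :
    sq (ssup a b) = ssup (sq a) (sq b) := by
  rw [sq, odot_ssup, odot_comm (ssup a b) a, odot_comm (ssup a b) b, odot_ssup, odot_ssup,
    odot_comm b a, h, ssup_zero, zero_ssup]
  rfl

lemma op_self_ssup_neg (x : A) : op (ssup x (neg x)) (ssup x (neg x)) = one :=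
  eq_one_of_one_le (neg_op_self x ▸ op_le_op (le_ssup_right x (neg x)) (le_ssup_left x (neg x)))

lemma nsm_add (a b : ℕ) (x : A) : nsm (a + b) x = op (nsm a x) (nsm b x) := by
  induction a with
  | zero => rw [Nat.zero_add, nsm, zero_op]
  | succ a ih => rw [Nat.succ_add, nsm, nsm, ih, op_assoc]

lemma nsm_one (x : A) : nsm 1 x = x := op_zero x

lemma nsm_two (x : A) : nsm 2 x = op x x := by
  rw [show nsm 2 x = op x (nsm 1 x) from rfl, nsm_one]

lemma nsm_two_mul (k : ℕ) (x : A) : nsm (2 * k) x = nsm k (op x x) := by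
  induction k with
  | zero => rfl
  | succ k ih => rw [Nat.mul_succ, nsm_add, ih, nsm_two, op_comm, nsm]

lemma nsm_eq_one_of_le {m n : ℕ} {x : A} (hmn : m ≤ n) (h : nsm m x = one) : nsm n x = one := by
  rw [← Nat.sub_add_cancel hmn, nsm_add, h, op_one]

section Chang

variable (chang : ∀ x : A, op (sq x) (sq x) = sq (op x x))
include chang

lemma op_self_eq_one_of_four (x : A) (h : op (op x x) (op x x) = one) : op x x = one := by
  set u := sq (neg x)
  have hu_neg : neg u = op x x := by simp only [u, sq, neg_odot, neg_neg]
  have hu_sq : sq u = zero := by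
    rw [sq, odot, hu_neg, h, neg_one]
  have hu_odot : odot u (sq x) = zero := by
    rw [← sq_odot, odot_comm, odot_neg_self, sq, zero_odot]
  set m := ssup (sq x) u
  have hm : op m m = one := by
    have hb := chang (ssup x (neg x))
    rwa [op_self_ssup_neg, one_sq, sq_ssup_of_odot_eq_zero (odot_neg_self x)] at hb
  have hm_sq : sq m = sq (sq x) := by
    rw [sq_ssup_of_odot_eq_zero (odot_comm u (sq x) ▸ hu_odot), hu_sq, ssup_zero]
  have h4 : op (sq (sq x)) (sq (sq x)) = one := by
    rw [← hm_sq, chang m, hm, one_sq]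
  exact op_self_eq_one_of_op_sq_eq_one (op_self_eq_one_of_op_sq_eq_one h4)

lemma op_self_eq_one_of_nsm_two_pow (x : A) (n : ℕ) (h : nsm (2 ^ n) x = one) :
    op x x = one := by
  induction n generalizing x with
  | zero => rw [pow_zero, nsm_one] at h; rw [h, op_one]
  | succ n ih =>
    rw [pow_succ', nsm_two_mul] at h
    exact op_self_eq_one_of_four chang x (ih (op x x) h)

end Chang

end MV

open MV in
/-- In an MV-algebra satisfying `2x² = (2x)²`: if `2ⁿx = 1` for some `n` then `2x = 1`.
In particular every element of finite order has order at most `2`. -/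
theorem chang_order_at_most_two {A : Type*} [MV A]
    (chang : ∀ x : A, op (sq x) (sq x) = sq (op x x)) :
    (∀ (x : A) (n : ℕ), nsm (2 ^ n) x = one → op x x = one) ∧
    (∀ x : A, (∃ n : ℕ, 0 < n ∧ nsm n x = one) → op x x = one) :=
  ⟨op_self_eq_one_of_nsm_two_pow chang, fun x ⟨n, _, hn⟩ =>
    op_self_eq_one_of_nsm_two_pow chang x n (nsm_eq_one_of_le Nat.lt_two_pow_self.le hn)⟩
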